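/- arXiv:2604.25414 — 2 statements merged into one kernel-verified Lean document; each statement's English description precedes it below -/
import Mathlib

section
/- Suppose q > 4 and let f : F_q → F_q be given by f(x) = (ax + b)^{q−2} + c with a ∈ F_q^* and b, c ∈ F_q (i.e., f is a permutation of Carlitz rank at most 1 that is not affine). Then f has additive index q. -/
/-!
A function of codimension `k < n` is affine along the nonzero vectors of its subspace `U`, so
it has a *linear structure*: a direction `u ≠ 0` in which the derivative `x ↦ f (x + u) - f x`
is constant. On `𝔽_q` we have `x ^ (q - 2) = x⁻¹`, and `f` is inversion up to affine changes of
variable, so it suffices that `x ↦ x⁻¹` has no linear structure. The derivative in direction `u`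
is `u⁻¹` at `0` and `-u / (t (t + u))` at `t ∉ {0, -u}`; equality forces
`t ^ 2 + u t + u ^ 2 = 0`, which fails for some such `t` once the field has more than `4`
elements.
-/

open Polynomial

/-- A function `f : 𝔽_q → 𝔽_q` (with `q = p^n`) has codimension at most `k` if there are an
`𝔽_p`-linear map `L : 𝔽_q → 𝔽_q`, an `𝔽_p`-subspace `U` of dimension `n - k`, and a constant
`a_V` for each coset `V` of `U`, such that `f(x) = L(x) + a_{U+x}` for all `x`. -/
def HasCodimAtMost (p n : ℕ) {F : Type*} [Field F] [Fintype F] [Algebra (ZMod p) F]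
    (f : F → F) (k : ℕ) : Prop :=
  ∃ (L : F →ₗ[ZMod p] F) (U : Submodule (ZMod p) F) (a : F ⧸ U → F),
    Module.finrank (ZMod p) ↥U = n - k ∧
    ∀ x : F, f x = L x + a (Submodule.Quotient.mk x)

/-- The codimension `codim f` is the smallest `k` such that `f` has codimension at most `k`. -/
noncomputable def codim (p n : ℕ) {F : Type*} [Field F] [Fintype F] [Algebra (ZMod p) F]
    (f : F → F) : ℕ :=
  sInf {k | HasCodimAtMost p n f k}

/-- The additive index of `f` is `AddInd f = p ^ codim f`. -/
noncomputable def addInd (p n : ℕ) {F : Type*} [Field F] [Fintype F] [Algebra (ZMod p) F]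
    (f : F → F) : ℕ :=
  p ^ codim p n f

open Cardinal

theorem FiniteField.pow_card_sub_two_eq_inv {K : Type*} [GroupWithZero K] [Fintype K]
    (hK : 2 < Fintype.card K) (x : K) : x ^ (Fintype.card K - 2) = x⁻¹ := by
  rcases eq_or_ne x 0 with rfl | hx
  · rw [inv_zero, zero_pow (by omega)]
  · refine eq_inv_of_mul_eq_one_left ?_
    rw [← pow_succ, show Fintype.card K - 2 + 1 = Fintype.card K - 1 by omega]
    exact FiniteField.pow_card_sub_one_eq_one x hx

def HasLinearStructure {G H : Type*} [AddGroup G] [AddGroup H] (f : G → H) : Prop :=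
  ∃ u ≠ 0, ∃ d, ∀ x, f (x + u) - f x = d

theorem HasLinearStructure.of_affine_comp {K : Type*} [Field K] {g : K → K} {a b c : K}
    (ha : a ≠ 0) (h : HasLinearStructure fun x => g (a * x + b) + c) :
    HasLinearStructure g := by
  obtain ⟨u, hu, d, hd⟩ := h
  refine ⟨a * u, mul_ne_zero ha hu, d, fun t => ?_⟩
  have key := hd ((t - b) / a)
  dsimp only at key
  rwa [show a * ((t - b) / a + u) + b = t + a * u by field_simp; ring,
    show a * ((t - b) / a) + b = t by field_simp; ring, add_sub_add_right_eq_sub] at key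

theorem not_hasLinearStructure_inv {K : Type*} [Field K] (hK : 4 < #K) :
    ¬ HasLinearStructure fun x : K => x⁻¹ := by
  rintro ⟨u, hu, d, hd⟩
  have hd0 : d = u⁻¹ := by simpa using (hd 0).symm
  set P : K[X] := X * (X + C u) * (X ^ 2 + C u * X + C (u ^ 2))
  have hPdeg : P.natDegree = 4 := by unfold P; compute_degree!
  have hP0 : P ≠ 0 := fun h => by simp [h] at hPdeg
  obtain ⟨t, ht⟩ := P.exists_eval_ne_zero_of_natDegree_lt_card hP0 (by rwa [hPdeg])
  simp only [P, eval_mul, eval_add, eval_pow, eval_X, eval_C, ne_eq, mul_eq_zero, not_or] at ht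
  obtain ⟨⟨ht0, htu⟩, htq⟩ := ht
  have key := hd t
  rw [hd0] at key
  field_simp at key
  exact htq (by linear_combination -key)

section Codimension

variable {p n : ℕ} [Fact (1 < p)] {F : Type*} [Field F] [Fintype F] [Algebra (ZMod p) F]

theorem hasCodimAtMost_self (f : F → F) : HasCodimAtMost p n f n := by
  refine ⟨0, ⊥, fun v => f (Submodule.quotEquivOfEqBot ⊥ rfl v),
    by rw [Module.finrank_zero_of_subsingleton, Nat.sub_self], fun x => ?_⟩
  simp [Submodule.quotEquivOfEqBot_apply_mk]

theorem HasCodimAtMost.hasLinearStructure {f : F → F} {k : ℕ} (h : HasCodimAtMost p n f k)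
    (hk : k < n) : HasLinearStructure f := by
  obtain ⟨L, U, A, hdim, hfA⟩ := h
  have : Nontrivial U := Module.nontrivial_of_finrank_pos (R := ZMod p) (by omega)
  obtain ⟨⟨u, huU⟩, hu⟩ := exists_ne (0 : U)
  rw [ne_eq, Submodule.mk_eq_zero] at hu
  refine ⟨u, hu, L u, fun x => ?_⟩
  have hcoset : (Submodule.Quotient.mk (x + u) : F ⧸ U) = Submodule.Quotient.mk x := by
    rw [Submodule.Quotient.eq]
    simpa using huU
  rw [hfA, hfA, hcoset, map_add, add_sub_add_right_eq_sub, add_sub_cancel_left]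

theorem codim_eq_of_not_hasLinearStructure {f : F → F} (hf : ¬ HasLinearStructure f) :
    codim p n f = n :=
  le_antisymm (Nat.sInf_le (hasCodimAtMost_self f)) <|
    le_csInf ⟨n, hasCodimAtMost_self f⟩ fun _ hk =>
      not_lt.mp fun hlt => hf (hk.hasLinearStructure hlt)

end Codimension

theorem stmt7_general (p n : ℕ) [Fact p.Prime] {F : Type*} [Field F]
    [Fintype F] [Algebra (ZMod p) F] (hcard : Fintype.card F = p ^ n)
    (hq : 4 < Fintype.card F) (a b c : F) (ha : a ≠ 0) :
    addInd p n (fun x : F => (a * x + b) ^ (Fintype.card F - 2) + c) = Fintype.card F := by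
  have hinv : (fun x : F => (a * x + b) ^ (Fintype.card F - 2) + c) =
      fun x => (a * x + b)⁻¹ + c := by
    simp only [FiniteField.pow_card_sub_two_eq_inv (by omega : 2 < Fintype.card F)]
  have hF : 4 < #F := by rw [Cardinal.mk_fintype]; exact_mod_cast hq
  rw [addInd, hinv, codim_eq_of_not_hasLinearStructure
    fun h => not_hasLinearStructure_inv hF (h.of_affine_comp ha), hcard]

/-- Suppose `q > 4` and `f(x) = (ax + b)^(q-2) + c` with `a ≠ 0` (a
permutation of Carlitz rank at most 1 that is not affine). Then `f` has additive index `q`. -/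
theorem stmt7 (p n : ℕ) [Fact p.Prime] (hn : 1 ≤ n) {F : Type*} [Field F]
    [Fintype F] [Algebra (ZMod p) F] (hcard : Fintype.card F = p ^ n)
    (hq : 4 < Fintype.card F) (a b c : F) (ha : a ≠ 0) :
    addInd p n (fun x : F => (a * x + b) ^ (Fintype.card F - 2) + c) = Fintype.card F :=
  stmt7_general p n hcard hq a b c ha
end

section
/- Suppose p > 2 and let f be the discrete-logarithm permutation of F_{p^n} defined below. Then the Carlitz rank of f satisfies Crk(f) ≥ p^n − 3(2p)^{n/2}. -/
open Polynomial

/-- The Carlitz expression `P_m(a_0, …, a_{m+1}; x)`: `carlitzIter 0 a x = a 0 * x + a 1`, and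
`carlitzIter (m+1) a x = (carlitzIter m a x)^(q-2) + a (m+2)`. -/
def carlitzIter {F : Type*} [Field F] [Fintype F] : ℕ → (ℕ → F) → F → F
  | 0, a, x => a 0 * x + a 1
  | (m + 1), a, x => (carlitzIter m a x) ^ (Fintype.card F - 2) + a (m + 2)

/-- `f` has Carlitz rank at most `m`: it can be represented as
`f(x) = (⋯((a_0 x + a_1)^(q-2) + a_2)^(q-2) + ⋯ + a_m)^(q-2) + a_{m+1}` with
`a_0, a_2, …, a_m ≠ 0`. -/
def HasCrkAtMost {F : Type*} [Field F] [Fintype F] (f : F → F) (m : ℕ) : Prop :=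
  ∃ a : ℕ → F, a 0 ≠ 0 ∧ (∀ i, 2 ≤ i → i ≤ m → a i ≠ 0) ∧ ∀ x, f x = carlitzIter m a x

/-- The Carlitz rank of `f` is the smallest `m` admitting such a representation. -/
noncomputable def crk {F : Type*} [Field F] [Fintype F] (f : F → F) : ℕ :=
  sInf {m | HasCrkAtMost f m}

/-- The unique polynomial of degree at most `q - 1` interpolating `f` on `𝔽_q`;
`deg f` and the weight `w(f)` are its degree and its number of nonzero coefficients. -/
noncomputable def interp {F : Type*} [Field F] [Fintype F] [DecidableEq F] (f : F → F) : Polynomial F :=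
  Lagrange.interpolate Finset.univ id f
/-!
Every permutation of `𝔽_q` is a product of transpositions, and a transposition is a Carlitz
expression, so `crk f` is attained. A Carlitz expression of length `m` coincides with a Möbius map
`x ↦ (αx + β)/(γx + δ)` outside at most `m` points, so `f` agrees with such a map at all but
`crk f` points.

Write the nonzero agreement points as `ζ^x` with `x < q - 1` and let `N` be their number. For two
agreement exponents `x < y = x + d`, the difference `f(ζ^y) - f(ζ^x)` depends only on `d` and on
the positions of the carries in the base-`p` addition `x + d` (the field has characteristic `p`).
Eliminating `f(ζ^x)` between the two Möbius relations then makes `ζ^x` a root of a nonzero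
quadratic determined by `d` and the carries. Counting pairs gives
`N² - N ≤ 4 (q - 1) 2^n ≤ 4 (2p)^n`, so `N ≤ 2 (2p)^(n/2) + 1` and
`q ≤ crk f + N + 1 ≤ crk f + 3 (2p)^(n/2)`.
-/

open Finset

theorem swap_apply_eq_carlitz_form {F : Type*} [Field F] [DecidableEq F] {u v : F} (huv : u ≠ v)
    (x : F) :
    Equiv.swap u v x =
      -(v - u) ^ 2 * (((x + -v)⁻¹ + (v - u)⁻¹)⁻¹ + -(v - u))⁻¹ + u := by
  have hc : v - u ≠ 0 := sub_ne_zero.2 huv.symm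
  rw [Equiv.swap_apply_def]
  split_ifs with hxu hxv
  · subst x
    rw [show u + -v = -(v - u) by ring, inv_neg, neg_add_cancel, inv_zero, zero_add, inv_neg]
    field_simp
    ring
  · subst x
    rw [add_neg_cancel, inv_zero, zero_add, inv_inv, add_neg_cancel, inv_zero, mul_zero, zero_add]
  · have hxv' : x + -v ≠ 0 := by rwa [← sub_eq_add_neg, sub_ne_zero]
    have hxu' : x - u ≠ 0 := sub_ne_zero.2 hxu
    rw [show (x + -v)⁻¹ + (v - u)⁻¹ = (x - u) / ((v - u) * (x + -v)) by field_simp; ring,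
      inv_div, show (v - u) * (x + -v) / (x - u) + -(v - u) = -(v - u) ^ 2 / (x - u) by
        field_simp; ring, inv_div]
    field_simp
    ring

section Carlitz

variable {F : Type*} [Field F] [Fintype F]

theorem pow_card_sub_two_eq_inv (hq : 2 < Fintype.card F) (y : F) :
    y ^ (Fintype.card F - 2) = y⁻¹ := by
  rcases eq_or_ne y 0 with rfl | hy
  · rw [inv_zero, zero_pow (by omega)]
  · refine eq_inv_of_mul_eq_one_left ?_
    rw [← pow_succ, show Fintype.card F - 2 + 1 = Fintype.card F - 1 by omega,
      FiniteField.pow_card_sub_one_eq_one y hy]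

theorem carlitzIter_succ (hq : 2 < Fintype.card F) (m : ℕ) (a : ℕ → F) (x : F) :
    carlitzIter (m + 1) a x = (carlitzIter m a x)⁻¹ + a (m + 2) := by
  rw [carlitzIter, pow_card_sub_two_eq_inv hq]

theorem carlitzIter_congr {m : ℕ} {a a' : ℕ → F} (h : ∀ i ≤ m + 1, a i = a' i) :
    carlitzIter m a = carlitzIter m a' := by
  induction m with
  | zero => funext x; simp only [carlitzIter, h 0 (by omega), h 1 (by omega)]
  | succ m ih =>
    funext x
    simp only [carlitzIter, ih fun i hi => h i (by omega), h (m + 2) le_rfl]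

theorem exists_carlitzIter_eq_mul_add (hq : 2 < Fintype.card F) {m : ℕ} {a : ℕ → F}
    (ha0 : a 0 ≠ 0) (ha : ∀ i, 2 ≤ i → i ≤ m → a i ≠ 0) {c : F} (hc : c ≠ 0) (d : F) :
    ∃ a' : ℕ → F, a' 0 ≠ 0 ∧ (∀ i, 2 ≤ i → i ≤ m → a' i ≠ 0) ∧
      a' (m + 1) = c * a (m + 1) + d ∧ ∀ x, carlitzIter m a' x = c * carlitzIter m a x + d := by
  induction m generalizing c d with
  | zero =>
    refine ⟨Function.update (fun i => c * a i) 1 (c * a 1 + d), by simp [hc, ha0], by omega,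
      by simp, fun x => ?_⟩
    simp only [carlitzIter, Function.update_self, Function.update_of_ne zero_ne_one]
    ring
  | succ m ih =>
    -- `c * (y⁻¹ + e) + d = (c⁻¹ * y)⁻¹ + (c * e + d)`
    obtain ⟨a', ha'0, ha', htop, heq⟩ :=
      ih (fun i h2 hi => ha i h2 (by omega)) (inv_ne_zero hc) 0
    refine ⟨Function.update a' (m + 2) (c * a (m + 2) + d), by simpa using ha'0, ?_, by simp,
      fun x => ?_⟩
    · intro i h2 hi
      rw [Function.update_of_ne (by omega)]
      rcases (show i ≤ m ∨ i = m + 1 by omega) with hi | rfl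
      · exact ha' i h2 hi
      · rw [htop, add_zero]
        exact mul_ne_zero (inv_ne_zero hc) (ha _ h2 le_rfl)
    · have hcongr : carlitzIter m (Function.update a' (m + 2) (c * a (m + 2) + d)) =
          carlitzIter m a' := carlitzIter_congr fun i hi => Function.update_of_ne (by omega) _ _
      rw [carlitzIter_succ hq, carlitzIter_succ hq, hcongr, heq, add_zero, Function.update_self,
        mul_inv, inv_inv]
      ring

def HasCarlitzExpr (f : F → F) : Prop :=
  ∃ m, HasCrkAtMost f m

theorem hasCarlitzExpr_id : HasCarlitzExpr (id : F → F) :=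
  ⟨0, fun i => if i = 0 then 1 else 0, by simp, by omega, fun x => by simp [carlitzIter]⟩

namespace HasCarlitzExpr

variable {f g : F → F}

theorem mul_add (hq : 2 < Fintype.card F) (hf : HasCarlitzExpr f) {c : F} (hc : c ≠ 0) (d : F) :
    HasCarlitzExpr fun x => c * f x + d := by
  obtain ⟨m, a, ha0, ha, hfa⟩ := hf
  obtain ⟨a', ha'0, ha', -, heq⟩ := exists_carlitzIter_eq_mul_add hq ha0 ha hc d
  exact ⟨m, a', ha'0, ha', fun x => by simp only [heq, hfa]⟩

theorem add_const (hq : 2 < Fintype.card F) (hf : HasCarlitzExpr f) (d : F) :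
    HasCarlitzExpr fun x => f x + d := by
  simpa only [one_mul] using hf.mul_add hq one_ne_zero d

theorem inv (hq : 2 < Fintype.card F) (hf : HasCarlitzExpr f) :
    HasCarlitzExpr fun x => (f x)⁻¹ := by
  obtain ⟨m, a, ha0, ha, hfa⟩ := hf
  by_cases htop : 1 ≤ m ∧ a (m + 1) = 0
  · obtain ⟨k, rfl⟩ : ∃ k, m = k + 1 := ⟨m - 1, by omega⟩
    refine ⟨k, a, ha0, fun i h2 hi => ha i h2 (by omega), fun x => ?_⟩
    simp only [hfa, carlitzIter_succ hq, htop.2, add_zero, inv_inv]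
  · refine ⟨m + 1, Function.update a (m + 2) 0, by simpa using ha0, fun i h2 hi => ?_,
      fun x => ?_⟩
    · rw [Function.update_of_ne (by omega)]
      rcases (show i ≤ m ∨ i = m + 1 by omega) with hi | rfl
      · exact ha i h2 hi
      · exact fun h => htop ⟨by omega, h⟩
    · have hcongr : carlitzIter m (Function.update a (m + 2) 0) = carlitzIter m a :=
        carlitzIter_congr fun i hi => Function.update_of_ne (by omega) _ _
      simp only [carlitzIter_succ hq, hcongr, Function.update_self, add_zero, hfa]

theorem carlitzIter_comp (hq : 2 < Fintype.card F) (hg : HasCarlitzExpr g) (m : ℕ) {a : ℕ → F}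
    (ha0 : a 0 ≠ 0) :
    HasCarlitzExpr fun x => carlitzIter m a (g x) := by
  induction m with
  | zero => exact hg.mul_add hq ha0 (a 1)
  | succ m ih => simpa only [carlitzIter_succ hq] using (ih.inv hq).add_const hq (a (m + 2))

theorem comp (hq : 2 < Fintype.card F) (hf : HasCarlitzExpr f) (hg : HasCarlitzExpr g) :
    HasCarlitzExpr (f ∘ g) := by
  obtain ⟨m, a, ha0, -, hfa⟩ := hf
  obtain rfl : f = carlitzIter m a := funext hfa
  exact hg.carlitzIter_comp hq m ha0

end HasCarlitzExpr

theorem hasCarlitzExpr_swap [DecidableEq F] (hq : 2 < Fintype.card F) {u v : F} (huv : u ≠ v) :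
    HasCarlitzExpr (Equiv.swap u v) := by
  have hc : -(v - u) ^ 2 ≠ 0 := neg_ne_zero.2 (pow_ne_zero 2 (sub_ne_zero.2 huv.symm))
  have h := ((((hasCarlitzExpr_id.add_const hq (-v)).inv hq).add_const hq (v - u)⁻¹).inv
    hq |>.add_const hq (-(v - u)) |>.inv hq).mul_add hq hc u
  simpa only [id, ← swap_apply_eq_carlitz_form huv] using h

theorem hasCarlitzExpr_perm (hq : 2 < Fintype.card F) (σ : Equiv.Perm F) :
    HasCarlitzExpr σ := by
  classical
  refine Equiv.Perm.swap_induction_on σ hasCarlitzExpr_id fun σ u v huv ih => ?_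
  rw [Equiv.Perm.coe_mul]
  exact (hasCarlitzExpr_swap hq huv).comp hq ih

theorem hasCrkAtMost_crk (hq : 2 < Fintype.card F) {f : F → F} (hf : Function.Bijective f) :
    HasCrkAtMost f (crk f) :=
  Nat.sInf_mem (hasCarlitzExpr_perm hq (Equiv.ofBijective f hf))

end Carlitz

section Mobius

variable {F : Type*} [Field F] [Fintype F] [DecidableEq F]

theorem card_filter_mul_add_eq_zero_le_one {α β : F} (h : α ≠ 0 ∨ β ≠ 0) :
    #{x | α * x + β = 0} ≤ 1 := by
  refine card_le_one.2 fun x hx y hy => ?_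
  simp only [mem_filter, mem_univ, true_and] at hx hy
  have hα : α ≠ 0 := by
    rintro rfl
    exact h.resolve_left (not_not.2 rfl) (by simpa using hx)
  exact mul_left_cancel₀ hα (by linear_combination hx - hy)

/-- Each inversion in a Carlitz expression adds at most one pole. -/
theorem exists_mobius_carlitzIter (hq : 2 < Fintype.card F) (m : ℕ) {a : ℕ → F}
    (ha0 : a 0 ≠ 0) :
    ∃ α β γ δ : F, α * δ - β * γ ≠ 0 ∧
      #{x | γ * x + δ = 0 ∨ (γ * x + δ) * carlitzIter m a x ≠ α * x + β} ≤ m := by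
  induction m with
  | zero => exact ⟨a 0, a 1, 0, 1, by simpa using ha0, by simp [carlitzIter]⟩
  | succ m ih =>
    obtain ⟨α, β, γ, δ, hdet, hcard⟩ := ih
    refine ⟨γ + a (m + 2) * α, δ + a (m + 2) * β, α, β, fun h => hdet ?_, ?_⟩
    · linear_combination -h
    have hαβ : α ≠ 0 ∨ β ≠ 0 := by
      by_contra! h
      exact hdet (by simp [h.1, h.2])
    have hsub : univ.filter (fun x => α * x + β = 0 ∨ (α * x + β) * carlitzIter (m + 1) a x ≠
          (γ + a (m + 2) * α) * x + (δ + a (m + 2) * β)) ⊆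
        univ.filter (fun x => γ * x + δ = 0 ∨ (γ * x + δ) * carlitzIter m a x ≠ α * x + β)
          ∪ univ.filter (fun x => α * x + β = 0) := by
      intro x
      simp only [mem_filter, mem_univ, true_and, mem_union]
      intro hx
      by_contra! h
      obtain ⟨⟨hden, hval⟩, hnum⟩ := h
      have hg : carlitzIter m a x = (α * x + β) / (γ * x + δ) := by
        rw [eq_div_iff hden]; linear_combination hval
      refine hx.elim hnum fun h => h ?_
      rw [carlitzIter_succ hq, hg, inv_div]
      field_simp
      ring
    exact (card_le_card hsub).trans
      ((card_union_le _ _).trans (add_le_add hcard (card_filter_mul_add_eq_zero_le_one hαβ)))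

theorem HasCrkAtMost.exists_mobius (hq : 2 < Fintype.card F) {f : F → F} {m : ℕ}
    (hf : HasCrkAtMost f m) :
    ∃ α β γ δ : F, α * δ - β * γ ≠ 0 ∧
      #{x | (γ * x + δ) * f x ≠ α * x + β} ≤ m := by
  obtain ⟨a, ha0, -, hfa⟩ := hf
  obtain ⟨α, β, γ, δ, hdet, hcard⟩ := exists_mobius_carlitzIter hq m ha0
  refine ⟨α, β, γ, δ, hdet, (card_le_card fun x => ?_).trans hcard⟩
  simp only [mem_filter, mem_univ, true_and, hfa]
  exact Or.inr

end Mobius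

namespace Nat

theorem eq_of_forall_div_pow_mod_eq {b n x y : ℕ} (hx : x < b ^ n) (hy : y < b ^ n)
    (h : ∀ i < n, x / b ^ i % b = y / b ^ i % b) : x = y := by
  induction n generalizing x y with
  | zero => simp only [pow_zero, Nat.lt_one_iff] at hx hy; rw [hx, hy]
  | succ n ih =>
    have hb : 0 < b := Nat.pos_of_ne_zero fun hb => by simp [hb] at hx
    have hdiv : x / b = y / b := by
      refine ih ?_ ?_ fun i hi => ?_
      · rwa [Nat.div_lt_iff_lt_mul hb, ← pow_succ]
      · rwa [Nat.div_lt_iff_lt_mul hb, ← pow_succ]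
      · simpa only [Nat.div_div_eq_div_mul, ← pow_succ'] using h (i + 1) (by omega)
    have hmod : x % b = y % b := by simpa using h 0 (by omega)
    rw [← Nat.div_add_mod x b, ← Nat.div_add_mod y b, hdiv, hmod]

theorem pow_sub_one_div_pow_mod {b n i : ℕ} (hb : 0 < b) (hi : i < n) :
    (b ^ n - 1) / b ^ i % b = b - 1 := by
  induction n generalizing i with
  | zero => omega
  | succ n ih =>
    have hpos : 0 < b ^ n := pow_pos hb n
    have hsplit : b ^ (n + 1) - 1 = (b - 1) + b * (b ^ n - 1) := by
      rw [pow_succ, Nat.mul_sub_one, Nat.mul_comm]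
      have : b ≤ b * b ^ n := Nat.le_mul_of_pos_right b hpos
      omega
    rcases i with _ | i
    · rw [hsplit, pow_zero, Nat.div_one, Nat.add_mul_mod_self_left, Nat.mod_eq_of_lt (by omega)]
    · rw [pow_succ' (n := i), ← Nat.div_div_eq_div_mul, hsplit, Nat.add_mul_div_left _ _ hb,
        Nat.div_eq_of_lt (show b - 1 < b by omega), zero_add]
      exact ih (by omega)

end Nat

section DigitValue

variable {F : Type*} [Field F] (p n : ℕ) (lam : F)

def digitVal (x : ℕ) : F :=
  ∑ i : Fin n, ((x / p ^ (i : ℕ) % p : ℕ) : F) * lam ^ (i : ℕ)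

/-- The positions receiving a carry when `x` and `d` are added in base `p`. -/
def carries (x d : ℕ) : Fin n → Bool :=
  fun i => decide (p ^ (i : ℕ) ≤ x % p ^ (i : ℕ) + d % p ^ (i : ℕ))

def carryShift (d : ℕ) (c : Fin n → Bool) : F :=
  ∑ i : Fin n, (((d / p ^ (i : ℕ) : ℕ) : F) + if c i then 1 else 0) * lam ^ (i : ℕ)

theorem digitVal_add [CharP F p] (hp : 0 < p) (x d : ℕ) :
    digitVal p n lam (x + d) = digitVal p n lam x + carryShift p n lam d (carries p n x d) := by
  simp only [digitVal, carryShift, carries, ← sum_add_distrib, ← add_mul, ← CharP.cast_eq_mod,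
    Nat.add_div (pow_pos hp _)]
  push_cast
  simp only [decide_eq_true_eq, add_assoc]

theorem digitVal_pow_sub_one [CharP F p] (hp : 0 < p) :
    digitVal p n lam (p ^ n - 1) = -∑ i : Fin n, lam ^ (i : ℕ) := by
  simp only [digitVal, ← sum_neg_distrib]
  refine sum_congr rfl fun i _ => ?_
  rw [Nat.pow_sub_one_div_pow_mod hp i.isLt, Nat.cast_sub hp, CharP.cast_eq_zero, Nat.cast_one]
  ring

theorem digitVal_injOn [Algebra (ZMod p) F]
    (b : Module.Basis (Fin n) (ZMod p) F) (hb : ∀ i, b i = lam ^ (i : ℕ)) :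
    Set.InjOn (digitVal p n lam) (Set.Iio (p ^ n)) := by
  intro x hx y hy hxy
  have hrepr : ∀ z,
      digitVal p n lam z = ∑ i : Fin n, ((z / p ^ (i : ℕ) % p : ℕ) : ZMod p) • b i := by
    intro z
    simp only [digitVal, hb, Algebra.smul_def, map_natCast]
  refine Nat.eq_of_forall_div_pow_mod_eq hx hy fun i hi => ?_
  have h := congrArg (fun v => b.repr v ⟨i, hi⟩) ((hrepr x).symm.trans (hxy.trans (hrepr y)))
  simp only [Module.Basis.repr_sum_self, ZMod.natCast_eq_natCast_iff', Nat.mod_mod] at h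
  exact h

end DigitValue

section Counting

open Polynomial

variable {F : Type*} [Field F]

theorem exists_quadratic_of_mobius_shift {α β γ δ w : F} (hdet : α * δ - β * γ ≠ 0)
    (hw0 : w ≠ 0) (hw1 : w ≠ 1) (s : F) :
    ∃ P : F[X], P ≠ 0 ∧ P.natDegree ≤ 2 ∧ ∀ t v, (γ * t + δ) * v = α * t + β →
      (γ * (t * w) + δ) * (v + s) = α * (t * w) + β → P.IsRoot t := by
  -- the quadratic obtained by eliminating `v` between the two relations
  refine ⟨C (s * γ * γ * w) * X ^ 2
    + C (s * γ * δ * (w + 1) - (w - 1) * (α * δ - β * γ)) * X + C (s * δ * δ),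
    fun hP => ?_, natDegree_quadratic_le, fun t v h₁ h₂ => ?_⟩
  · have e₂ := congrArg (coeff · 2) hP
    have e₁ := congrArg (coeff · 1) hP
    have e₀ := congrArg (coeff · 0) hP
    simp only [coeff_add, coeff_C_mul, coeff_X_pow, coeff_X, coeff_C, coeff_zero] at e₂ e₁ e₀
    norm_num at e₂ e₁ e₀
    rcases eq_or_ne s 0 with rfl | hs
    · simp [sub_eq_zero, hw1, hdet] at e₁
    · have hγ : γ = 0 := by simpa [hs, hw0] using e₂
      have hδ : δ = 0 := by simpa [hs] using e₀
      exact hdet (by simp [hγ, hδ])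
  · simp only [IsRoot, eval_add, eval_mul, eval_pow, eval_C, eval_X]
    linear_combination (γ * t + δ) * h₂ - (γ * (t * w) + δ) * h₁

variable (p n : ℕ) (lam : F)

theorem card_offDiag_le_two_mul {α : Type*} [LinearOrder α] (s : Finset α) :
    #s.offDiag ≤ 2 * #{z ∈ s ×ˢ s | z.1 < z.2} := by
  calc #s.offDiag
      ≤ #({z ∈ s ×ˢ s | z.1 < z.2} ∪ {z ∈ s ×ˢ s | z.1 < z.2}.image Prod.swap) := by
        refine card_le_card fun z hz => ?_
        obtain ⟨h₁, h₂, hne⟩ := mem_offDiag.1 hz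
        rcases hne.lt_or_gt with h | h
        · exact mem_union_left _ (by simp [h₁, h₂, h])
        · exact mem_union_right _ (mem_image.2 ⟨z.swap, by simp [h₁, h₂, h], z.swap_swap⟩)
    _ ≤ 2 * #{z ∈ s ×ˢ s | z.1 < z.2} := by
        rw [two_mul]
        exact (card_union_le _ _).trans (add_le_add_right card_image_le _)

theorem card_lt_pairs_le_of_mobius [CharP F p] (hp : 0 < p) {α β γ δ ζ : F}
    (hdet : α * δ - β * γ ≠ 0) (hζ0 : ζ ≠ 0) {Q : ℕ}
    (hinj : Set.InjOn (ζ ^ ·) (Set.Iio Q))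
    {X : Finset ℕ} (hXQ : ∀ x ∈ X, x < Q)
    (hX : ∀ x ∈ X, (γ * ζ ^ x + δ) * digitVal p n lam x = α * ζ ^ x + β) :
    #{z ∈ X ×ˢ X | z.1 < z.2} ≤ 2 * (Q * 2 ^ n) := by
  classical
  let shape : ℕ × ℕ → ℕ × (Fin n → Bool) :=
    fun z => (z.2 - z.1, carries p n z.1 (z.2 - z.1))
  have hmaps :
      ∀ z ∈ {z ∈ X ×ˢ X | z.1 < z.2}, shape z ∈ range Q ×ˢ (univ : Finset _) := by
    intro z hz
    simp only [mem_filter, mem_product] at hz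
    simp only [shape, mem_product, mem_range, mem_univ, and_true]
    have := hXQ _ hz.1.2
    omega
  have hcard : #(range Q ×ˢ (univ : Finset (Fin n → Bool))) = Q * 2 ^ n := by
    simp [card_univ]
  rw [← hcard]
  refine card_le_mul_card_image_of_maps_to hmaps 2 fun ⟨d, c⟩ hdc => ?_
  simp only [mem_product, mem_range] at hdc
  rcases Nat.eq_zero_or_pos d with rfl | hd
  · refine (card_eq_zero.2 (filter_eq_empty_iff.2 fun z hz h => ?_)).le.trans (by omega)
    simp only [mem_filter, shape, Prod.mk.injEq] at hz h
    omega
  have hw1 : ζ ^ d ≠ 1 := fun h =>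
    hd.ne' (hinj (Set.mem_Iio.2 hdc.1) (Set.mem_Iio.2 (by omega)) (by simpa using h))
  obtain ⟨P, hP0, hPdeg, hProot⟩ :=
    exists_quadratic_of_mobius_shift hdet (pow_ne_zero d hζ0) hw1 (carryShift p n lam d c)
  calc #{z ∈ {z ∈ X ×ˢ X | z.1 < z.2} | shape z = (d, c)}
      ≤ #P.roots.toFinset := by
        refine card_le_card_of_injOn (fun z => ζ ^ z.1) (fun z hz => ?_) fun z hz z' hz' h => ?_
        · simp only [coe_filter, mem_filter, mem_product, shape, Prod.mk.injEq,
            Set.mem_ofPred_eq] at hz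
          obtain ⟨⟨⟨hz₁, hz₂⟩, hlt⟩, rfl, rfl⟩ := hz
          refine Multiset.mem_toFinset.2 ((mem_roots hP0).2 (hProot _ _ (hX _ hz₁) ?_))
          rw [← pow_add, ← digitVal_add p n lam hp, Nat.add_sub_cancel' hlt.le]
          exact hX _ hz₂
        · simp only [coe_filter, mem_filter, mem_product, shape, Prod.mk.injEq,
            Set.mem_ofPred_eq] at hz hz'
          have h₁ : z.1 = z'.1 := hinj (hXQ _ hz.1.1.1) (hXQ _ hz'.1.1.1) h
          exact Prod.ext h₁ (by omega)
    _ ≤ P.natDegree := (Multiset.toFinset_card_le _).trans (card_roots' P)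
    _ ≤ 2 := hPdeg

theorem card_sq_sub_le_of_mobius [CharP F p] (hp : 0 < p) {α β γ δ ζ : F}
    (hdet : α * δ - β * γ ≠ 0) (hζ0 : ζ ≠ 0) {Q : ℕ}
    (hinj : Set.InjOn (ζ ^ ·) (Set.Iio Q))
    {X : Finset ℕ} (hXQ : ∀ x ∈ X, x < Q)
    (hX : ∀ x ∈ X, (γ * ζ ^ x + δ) * digitVal p n lam x = α * ζ ^ x + β) :
    #X * #X - #X ≤ 4 * (Q * 2 ^ n) := by
  rw [← offDiag_card]
  calc #X.offDiag ≤ 2 * #{z ∈ X ×ˢ X | z.1 < z.2} := card_offDiag_le_two_mul X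
    _ ≤ 2 * (2 * (Q * 2 ^ n)) :=
        Nat.mul_le_mul_left 2 (card_lt_pairs_le_of_mobius p n lam hp hdet hζ0 hinj hXQ hX)
    _ = 4 * (Q * 2 ^ n) := by ring

end Counting

section DiscreteLog

variable {F : Type*} [Field F] [Fintype F]

theorem isPrimitiveRoot_of_forall_exists_pow_eq (hq : 2 < Fintype.card F) {ζ : F}
    (hζ : ∀ a : F, a ≠ 0 → ∃ x : ℕ, ζ ^ x = a) :
    IsPrimitiveRoot ζ (Fintype.card F - 1) := by
  classical
  have hζ0 : ζ ≠ 0 := by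
    rintro rfl
    obtain ⟨u, hu⟩ := Fintype.exists_ne_of_one_lt_card
      (by rw [Fintype.card_units]; omega : 1 < Fintype.card Fˣ) 1
    obtain ⟨x, hx⟩ := hζ u u.ne_zero
    rcases x with _ | x
    · exact hu (Units.val_eq_one.1 (by simpa using hx.symm))
    · exact u.ne_zero (by simpa using hx.symm)
  let U : Fˣ := Units.mk0 ζ hζ0
  have hU : ∀ v : Fˣ, v ∈ Subgroup.zpowers U := fun v => by
    obtain ⟨x, hx⟩ := hζ v v.ne_zero
    exact ⟨x, Units.ext (by simpa [U] using hx)⟩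
  have hord : orderOf U = Fintype.card F - 1 := by
    rw [orderOf_eq_card_of_forall_mem_zpowers hU, Nat.card_eq_fintype_card, Fintype.card_units]
  exact IsPrimitiveRoot.coe_units_iff.2 (hord ▸ IsPrimitiveRoot.orderOf U)

theorem injective_of_forall_pow_eq {ζ : F} (hζ : IsPrimitiveRoot ζ (Fintype.card F - 1))
    {f : F → F} {g : ℕ → F} (hg : Set.InjOn g (Set.Iio (Fintype.card F)))
    (hf : ∀ x < Fintype.card F - 1, f (ζ ^ x) = g x) (hf0 : f 0 = g (Fintype.card F - 1)) :
    Function.Injective f := by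
  have : NeZero (Fintype.card F - 1) := ⟨by have := Fintype.one_lt_card (α := F); omega⟩
  have hlog : ∀ t, ∃ x < Fintype.card F, f t = g x ∧
      (t = 0 ∧ x = Fintype.card F - 1 ∨ x < Fintype.card F - 1 ∧ ζ ^ x = t) := by
    intro t
    rcases eq_or_ne t 0 with rfl | ht
    · exact ⟨_, Nat.sub_lt Fintype.card_pos one_pos, hf0, Or.inl ⟨rfl, rfl⟩⟩
    · obtain ⟨x, hx, rfl⟩ :=
        hζ.eq_pow_of_pow_eq_one (FiniteField.pow_card_sub_one_eq_one t ht)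
      exact ⟨x, by omega, hf x hx, Or.inr ⟨hx, rfl⟩⟩
  intro t t' h
  obtain ⟨x, hx, hfx, hxt⟩ := hlog t
  obtain ⟨x', hx', hfx', hxt'⟩ := hlog t'
  obtain rfl : x = x' := hg hx hx' (hfx.symm.trans (h.trans hfx'))
  rcases hxt with ⟨rfl, h₀⟩ | ⟨hlt, rfl⟩ <;>
    rcases hxt' with ⟨rfl, h₀'⟩ | ⟨hlt', rfl⟩ <;> first | rfl | omega

theorem card_le_add_card_filter_pow [DecidableEq F] {ζ : F}
    (hζ : IsPrimitiveRoot ζ (Fintype.card F - 1)) {f : F → F} {g : ℕ → F}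
    (hf : ∀ x < Fintype.card F - 1, f (ζ ^ x) = g x) {α β γ δ : F} {m : ℕ}
    (hm : #{t | (γ * t + δ) * f t ≠ α * t + β} ≤ m) :
    Fintype.card F ≤ m + 1 +
      #{x ∈ range (Fintype.card F - 1) | (γ * ζ ^ x + δ) * g x = α * ζ ^ x + β} := by
  have : NeZero (Fintype.card F - 1) := ⟨by have := Fintype.one_lt_card (α := F); omega⟩
  set X := {x ∈ range (Fintype.card F - 1) | (γ * ζ ^ x + δ) * g x = α * ζ ^ x + β}
  have hagree : #{t | (γ * t + δ) * f t = α * t + β} ≤ #X + 1 := by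
    refine (card_le_card (t := insert 0 (X.image (ζ ^ ·))) fun t ht => ?_).trans
      ((card_insert_le _ _).trans (Nat.add_le_add_right card_image_le 1))
    rw [mem_insert, mem_image]
    refine or_iff_not_imp_left.2 fun ht0 => ?_
    simp only [mem_filter, mem_univ, true_and] at ht
    obtain ⟨x, hx, rfl⟩ := hζ.eq_pow_of_pow_eq_one (FiniteField.pow_card_sub_one_eq_one t ht0)
    exact ⟨x, mem_filter.2 ⟨mem_range.2 hx, hf x hx ▸ ht⟩, rfl⟩
  have hsplit := card_filter_add_card_filter_not (s := univ)
    (fun t => (γ * t + δ) * f t = α * t + β)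
  rw [card_univ] at hsplit
  simp only [ne_eq] at hm
  omega

end DiscreteLog

theorem sub_three_mul_rpow_le {q m N k n : ℕ} (hk : 4 ≤ k) (hn : 1 ≤ n)
    (hN : N * N - N ≤ 4 * k ^ n) (hq : q ≤ m + 1 + N) :
    (q : ℝ) - 3 * (k : ℝ) ^ ((n : ℝ) / 2) ≤ m := by
  set B := (k : ℝ) ^ ((n : ℝ) / 2)
  have hB0 : 0 ≤ B := by positivity
  have hB2 : B ^ 2 = (k : ℝ) ^ n := by
    rw [← Real.rpow_natCast B, ← Real.rpow_mul (by positivity), ← Real.rpow_natCast]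
    norm_num
  have hkn : (4 : ℝ) ≤ (k : ℝ) ^ n := by
    exact_mod_cast hk.trans (Nat.le_self_pow (by omega) k)
  have hN' : (N : ℝ) * N - N ≤ 4 * B ^ 2 := by
    rw [hB2, ← Nat.cast_mul, ← Nat.cast_sub (Nat.le_mul_self N)]
    exact_mod_cast hN
  have hq' : (q : ℝ) ≤ m + 1 + N := by exact_mod_cast hq
  have hB : 2 ≤ B := by nlinarith
  have hN1 : (N : ℝ) - 1 ≤ 2 * B := by nlinarith
  linarith

theorem stmt17_general (p n : ℕ) [Fact p.Prime] (hp : 2 < p) (hn : 1 ≤ n) {F : Type*} [Field F]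
    [Fintype F] [Algebra (ZMod p) F] (hcard : Fintype.card F = p ^ n)
    (ζ : F) (hζ : ∀ a : F, a ≠ 0 → ∃ x : ℕ, ζ ^ x = a)
    (lam : F) (hlam : ∃ b : Module.Basis (Fin n) (ZMod p) F, ∀ i : Fin n, b i = lam ^ (i : ℕ))
    (f : F → F)
    (hf : ∀ x : ℕ, x < p ^ n - 1 →
      f (ζ ^ x) = ∑ i : Fin n, ((x / p ^ (i : ℕ) % p : ℕ) : F) * lam ^ (i : ℕ))
    (hf0 : f 0 = - ∑ i : Fin n, lam ^ (i : ℕ)) :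
    (Fintype.card F : ℝ) - 3 * ((2 * p : ℕ) : ℝ) ^ ((n : ℝ) / 2) ≤ (crk f : ℝ) := by
  classical
  obtain ⟨b, hb⟩ := hlam
  have : CharP F p := (Algebra.charP_iff (ZMod p) F p).1 (ZMod.charP p)
  have hp0 : 0 < p := by omega
  have hq : 2 < Fintype.card F := hcard ▸ hp.trans_le (Nat.le_self_pow (by omega) p)
  have hζ' := isPrimitiveRoot_of_forall_exists_pow_eq hq hζ
  have hf' : ∀ x < Fintype.card F - 1, f (ζ ^ x) = digitVal p n lam x := hcard ▸ hf
  have hinj : Function.Injective f := injective_of_forall_pow_eq hζ'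
    (hcard ▸ digitVal_injOn p n lam b hb) hf'
    (by rw [hf0, hcard, digitVal_pow_sub_one p n lam hp0])
  obtain ⟨α, β, γ, δ, hdet, hm⟩ :=
    (hasCrkAtMost_crk hq (Finite.injective_iff_bijective.1 hinj)).exists_mobius hq
  refine sub_three_mul_rpow_le (by omega) hn ?_ (card_le_add_card_filter_pow hζ' hf' hm)
  calc _ ≤ 4 * ((Fintype.card F - 1) * 2 ^ n) :=
        card_sq_sub_le_of_mobius p n lam hp0 hdet (hζ'.ne_zero (by omega))
          (fun x hx y hy h => hζ'.pow_inj hx hy h) (fun x hx => mem_range.1 (mem_filter.1 hx).1)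
          fun x hx => (mem_filter.1 hx).2
    _ ≤ 4 * (2 * p) ^ n := by
        rw [mul_pow, hcard, mul_comm (2 ^ n)]
        gcongr
        omega

/-- Suppose `p > 2` and let `f` be the discrete-logarithm permutation of
`𝔽_{p^n}`: for a primitive element `ζ` and `λ` with `(1, λ, …, λ^(n-1))` an `𝔽_p`-basis,
`f(ζ^x) = x_0 + x_1 λ + ⋯ + x_{n-1} λ^(n-1)` where `x = x_0 + x_1 p + ⋯ + x_{n-1} p^(n-1)`
in base `p`, for `0 ≤ x ≤ p^n - 2`, and `f(0) = -1 - λ - ⋯ - λ^(n-1)`. Then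
`Crk f ≥ p^n - 3·(2p)^(n/2)`. -/
theorem stmt17 (p n : ℕ) [Fact p.Prime] (hp : 2 < p) (hn : 1 ≤ n) {F : Type*} [Field F]
    [Fintype F] [Algebra (ZMod p) F] [DecidableEq F] (hcard : Fintype.card F = p ^ n)
    (ζ : F) (hζ : ∀ a : F, a ≠ 0 → ∃ x : ℕ, ζ ^ x = a)
    (lam : F) (hlam : ∃ b : Module.Basis (Fin n) (ZMod p) F, ∀ i : Fin n, b i = lam ^ (i : ℕ))
    (f : F → F)
    (hf : ∀ x : ℕ, x < p ^ n - 1 →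
      f (ζ ^ x) = ∑ i : Fin n, ((x / p ^ (i : ℕ) % p : ℕ) : F) * lam ^ (i : ℕ))
    (hf0 : f 0 = - ∑ i : Fin n, lam ^ (i : ℕ)) :
    (Fintype.card F : ℝ) - 3 * ((2 * p : ℕ) : ℝ) ^ ((n : ℝ) / 2) ≤ (crk f : ℝ) :=
  stmt17_general p n hp hn hcard ζ hζ lam hlam f hf hf0
end
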